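/- The set of livelock-free processes (those with empty divergence set) is a closed subset of the metric space (T↓, d_U): if a sequence of livelock-free elements of T↓ converges to Q with respect to d_U, then Q is livelock-free. -/

import Mathlib

open scoped Classical

namespace CSPLL

variable {E : Type*}

/-- Events: `none` is the termination signal ✓, `some a` is a visible event. -/
abbrev Ev (E : Type*) := Option E

/-- A member of `Σ^{*✓}`: the termination event ✓ may occur only as the last element. -/
def ValidTrace (s : List (Ev E)) : Prop := (none : Ev E) ∉ s.dropLast

/-- The semantic domain `T↓`: pairs `(T, D)` of (behavioural) traces and divergences
satisfying the axioms of the divergence-strict traces model. -/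
structure TD (E : Type*) where
  T : Set (List (Ev E))
  D : Set (List (Ev E))
  valid : ∀ s ∈ T, ValidTrace s
  d_sub : D ⊆ T
  nonempty : [] ∈ T
  prefix_closed : ∀ s t : List (Ev E), s ++ t ∈ T → s ∈ T
  tick_div : ∀ s : List (Ev E), s ++ [none] ∈ D → s ∈ D
  div_ext : ∀ s t : List (Ev E), s ∈ D → (none : Ev E) ∉ s → ValidTrace t → s ++ t ∈ D

/-- Raw trace/divergence pairs. -/
abbrev Pair (E : Type*) := Set (List (Ev E)) × Set (List (Ev E))

def TD.pair (P : TD E) : Pair E := (P.T, P.D)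

/-- `lengthU U s` counts the occurrences of events from `U` in the trace `s`. -/
noncomputable def lengthU (U : Set E) (s : List (Ev E)) : ℕ :=
  (s.filter fun x => decide (∃ a ∈ U, x = some a)).length

/-- Restriction `(T,D) ↾_U n` of a trace/divergence pair to `U`-length `n`. -/
noncomputable def restrict (U : Set E) (n : ℕ) (P : Pair E) : Pair E :=
  let D' := P.2 ∪ {u | ∃ s t, s ∈ P.1 ∧ (none : Ev E) ∉ s ∧ lengthU U s = n ∧
                       ValidTrace t ∧ u = s ++ t}
  (D' ∪ {s ∈ P.1 | lengthU U s ≤ n}, D')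

/-- The metric `d_U(P,Q) = inf {2^{-n} | P ↾_U n = Q ↾_U n}` (taken in `[0,1]`). -/
noncomputable def dU (U : Set E) (P Q : Pair E) : ℝ :=
  sInf {x : ℝ | ∃ n : ℕ, restrict U n P = restrict U n Q ∧ x = (1 / 2 : ℝ) ^ n}

noncomputable def dTD (U : Set E) (P Q : TD E) : ℝ := dU U P.pair Q.pair

/-! A divergence `u ∈ Q.D` survives in every restriction `Q ↾_U n` with `n > lengthU U u`,
since the divergences added by the restriction all have `U`-length at least `n`. Processes
close to `Q` agree with `Q` on such a restriction, so they diverge on `u` as well. -/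

lemma lengthU_append (U : Set E) (s t : List (Ev E)) :
    lengthU U (s ++ t) = lengthU U s + lengthU U t := by
  simp [lengthU, List.filter_append]

lemma validTrace_append {s t : List (Ev E)} (hs : (none : Ev E) ∉ s) (ht : ValidTrace t) :
    ValidTrace (s ++ t) := by
  unfold ValidTrace at *
  rcases eq_or_ne t [] with rfl | hne
  · simpa using fun h => hs ((List.dropLast_sublist s).mem h)
  · rw [List.dropLast_append_of_ne_nil hne, List.mem_append]
    tauto

lemma mem_restrict_snd_iff_of_lengthU_lt {U : Set E} {n : ℕ} {P : Pair E} {u : List (Ev E)}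
    (hu : lengthU U u < n) : u ∈ (restrict U n P).2 ↔ u ∈ P.2 := by
  refine ⟨fun h => ?_, Or.inl⟩
  rcases h with h | ⟨s, t, -, -, rfl, -, rfl⟩
  · exact h
  · rw [lengthU_append] at hu
    omega

lemma mem_snd_iff_of_restrict_eq {U : Set E} {n : ℕ} {P Q : Pair E} {u : List (Ev E)}
    (h : restrict U n P = restrict U n Q) (hu : lengthU U u < n) : u ∈ P.2 ↔ u ∈ Q.2 := by
  rw [← mem_restrict_snd_iff_of_lengthU_lt hu, h, mem_restrict_snd_iff_of_lengthU_lt hu]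

lemma TD.restrict_zero_pair (U : Set E) (P : TD E) :
    restrict U 0 P.pair = ({s | ValidTrace s}, {s | ValidTrace s}) := by
  have hD : (restrict U 0 P.pair).2 = {s | ValidTrace s} := by
    ext u
    constructor
    · rintro (h | ⟨s, t, -, hs, -, ht, rfl⟩)
      · exact P.valid u (P.d_sub h)
      · exact validTrace_append hs ht
    · exact fun hu => Or.inr ⟨[], u, P.nonempty, by simp, by simp [lengthU], hu, rfl⟩
  refine Prod.ext ?_ hD
  change (restrict U 0 P.pair).2 ∪ _ = _
  rw [hD, Set.union_eq_self_of_subset_right]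
  exact fun s hs => P.valid s hs.1

lemma exists_restrict_eq_of_dTD_lt {U : Set E} {P Q : TD E} {m : ℕ}
    (h : dTD U P Q < (1 / 2 : ℝ) ^ m) :
    ∃ k, m < k ∧ restrict U k P.pair = restrict U k Q.pair := by
  have hne : {x : ℝ | ∃ n : ℕ, restrict U n P.pair = restrict U n Q.pair ∧
      x = (1 / 2 : ℝ) ^ n}.Nonempty :=
    ⟨1, 0, by rw [TD.restrict_zero_pair, TD.restrict_zero_pair], by norm_num⟩
  obtain ⟨_, ⟨k, hk, rfl⟩, hlt⟩ := exists_lt_of_csInf_lt hne h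
  exact ⟨k, (pow_lt_pow_iff_right_of_lt_one₀ (by norm_num) (by norm_num)).mp hlt, hk⟩

/-- The set of livelock-free processes (empty divergence set) is closed in
`(T↓, d_U)`: a limit of livelock-free elements is livelock-free. -/
theorem livelockFree_closed (U : Set E) (f : ℕ → TD E) (Q : TD E)
    (hlf : ∀ n, (f n).D = ∅)
    (hconv : ∀ ε : ℝ, 0 < ε → ∃ N : ℕ, ∀ n ≥ N, dTD U (f n) Q < ε) :
    Q.D = ∅ := by
  refine Set.eq_empty_iff_forall_notMem.mpr fun u hu => ?_
  obtain ⟨N, hN⟩ := hconv ((1 / 2 : ℝ) ^ lengthU U u) (by positivity)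
  obtain ⟨k, hk, heq⟩ := exists_restrict_eq_of_dTD_lt (hN N le_rfl)
  have hdiv : u ∈ (f N).D := (mem_snd_iff_of_restrict_eq heq hk).mpr hu
  simp [hlf N] at hdiv

end CSPLL
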